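/- Saturation of the SINR under linearly dependent estimates: with Z, h₁, h₂ = η^{-1}h₁ as above, the quantity γ = h₁ᴴ(h₂h₂ᴴ + Z)^{-1}h₁ satisfies γ < η², i.e., it is bounded above by η² regardless of M, Z, and h₁. -/

import Mathlib

open Matrix
open scoped ComplexOrder

/-!
Write `A = vvᴴ + Z`, `u = A⁻¹v` and `s = vᴴA⁻¹v = vᴴu`. Expanding `uᴴAu = uᴴv` gives
`s̄ = |s|² + uᴴZu`. Unless `u = 0` (and then `s = 0`), positive definiteness of `Z` gives
`Re s > |s|² ≥ (Re s)²`, whence `Re s < 1`.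
Since `h₁ = η h₂`, the SINR is `γ = η² s` with `s` computed for `v = h₂`.
-/

namespace Matrix

section replicateCol

variable {α m n ι : Type*} [NonUnitalSemiring α] [StarRing α]

theorem replicateCol_mul_conjTranspose_replicateCol [Fintype ι] [Unique ι] (v : m → α) :
    replicateCol ι v * (replicateCol ι v)ᴴ = vecMulVec v (star v) := by
  ext
  simp [mul_apply, vecMulVec_apply]

theorem conjTranspose_replicateCol_mul_mul_replicateCol_apply [Fintype n] (v : n → α)
    (B : Matrix n n α) (i j : ι) :
    ((replicateCol ι v)ᴴ * B * replicateCol ι v) i j = star v ⬝ᵥ (B *ᵥ v) := by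
  rw [conjTranspose_replicateCol, Matrix.mul_assoc, ← replicateCol_mulVec,
    replicateRow_mul_replicateCol_apply]

end replicateCol

open RCLike

variable {𝕜 n : Type*} [RCLike 𝕜] [Fintype n] [DecidableEq n] {Z : Matrix n n 𝕜}

theorem re_dotProduct_inv_vecMulVec_add_mulVec_lt_one (hZ : Z.PosDef) (v : n → 𝕜) :
    re (star v ⬝ᵥ ((vecMulVec v (star v) + Z)⁻¹ *ᵥ v)) < 1 := by
  set A := vecMulVec v (star v) + Z
  have hA : A.PosDef := PosDef.posSemidef_add (posSemidef_vecMulVec_self_star v) hZ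
  set u := A⁻¹ *ᵥ v
  have hAu : A *ᵥ u = v := by
    rw [mulVec_mulVec, mul_nonsing_inv _ ((isUnit_iff_isUnit_det A).mp hA.isUnit), one_mulVec]
  set s := star v ⬝ᵥ u
  rcases eq_or_ne u 0 with hu | hu
  · simp [s, hu]
  have hs : re s = ‖s‖ ^ 2 + re (star u ⬝ᵥ (Z *ᵥ u)) := by
    have h := congrArg (star u ⬝ᵥ ·) hAu
    simp only [A, add_mulVec, vecMulVec_mulVec, dotProduct_add, dotProduct_smul] at h
    rw [op_smul_eq_mul, star_dotProduct u v, star_def, RCLike.conj_mul] at h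
    have h' := congrArg re h
    rw [map_add, ← ofReal_pow, ofReal_re, conj_re] at h'
    linarith
  nlinarith [hZ.re_dotProduct_pos hu, re_le_norm s, norm_nonneg s]

theorem re_dotProduct_inv_vecMulVec_inv_smul_add_mulVec_lt_norm_sq (hZ : Z.PosDef) {c : 𝕜}
    (hc : c ≠ 0) (w : n → 𝕜) :
    re (star w ⬝ᵥ ((vecMulVec (c⁻¹ • w) (star (c⁻¹ • w)) + Z)⁻¹ *ᵥ w)) < ‖c‖ ^ 2 := by
  obtain ⟨v, rfl⟩ : ∃ v, w = c • v := ⟨c⁻¹ • w, (smul_inv_smul₀ hc w).symm⟩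
  rw [inv_smul_smul₀ hc, mulVec_smul, star_smul, smul_dotProduct, dotProduct_smul, smul_eq_mul,
    smul_eq_mul, ← mul_assoc, star_def, RCLike.conj_mul, ← ofReal_pow, re_ofReal_mul]
  exact mul_lt_of_lt_one_right (by positivity) (re_dotProduct_inv_vecMulVec_add_mulVec_lt_one hZ v)

end Matrix

theorem sinr_saturation_general {M : ℕ}
    (Z : Matrix (Fin M) (Fin M) ℂ) (hZ : Z.PosDef)
    (η : ℝ) (hη : η ≠ 0)
    (h₁ h₂ : Matrix (Fin M) (Fin 1) ℂ)
    (hdep : h₂ = ((η : ℂ))⁻¹ • h₁) :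
    ((h₁ᴴ * (h₂ * h₂ᴴ + Z)⁻¹ * h₁) 0 0).re < η ^ 2 := by
  obtain ⟨w, rfl⟩ : ∃ w, h₁ = replicateCol (Fin 1) w :=
    ⟨fun i => h₁ i 0, by ext i j; rw [Subsingleton.elim j 0]; rfl⟩
  subst hdep
  rw [← replicateCol_smul, replicateCol_mul_conjTranspose_replicateCol,
    conjTranspose_replicateCol_mul_mul_replicateCol_apply]
  simpa using
    re_dotProduct_inv_vecMulVec_inv_smul_add_mulVec_lt_norm_sq hZ (Complex.ofReal_ne_zero.2 hη) w

/-- Saturation of the SINR under linearly dependent estimates: for `Z` Hermitian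
positive definite, `η` real nonzero, `h₁ ≠ 0` and `h₂ = η⁻¹ h₁`, the quantity
`γ = h₁ᴴ(h₂h₂ᴴ + Z)⁻¹h₁` satisfies `γ < η²`, regardless of `M`, `Z` and `h₁`. -/
theorem sinr_saturation {M : ℕ}
    (Z : Matrix (Fin M) (Fin M) ℂ) (hZ : Z.PosDef)
    (η : ℝ) (hη : η ≠ 0)
    (h₁ h₂ : Matrix (Fin M) (Fin 1) ℂ) (hne : h₁ ≠ 0)
    (hdep : h₂ = ((η : ℂ))⁻¹ • h₁) :
    ((h₁ᴴ * (h₂ * h₂ᴴ + Z)⁻¹ * h₁) 0 0).re < η ^ 2 :=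
  sinr_saturation_general Z hZ η hη h₁ h₂ hdep
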